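/- Suppose Assumption 1 holds. For every column index n with 1 ≤ n ≤ d_in·h_in·w_in, letting j = ⌈n/(h_in·w_in)⌉, there exists an index set 𝒜 ∈ 𝒮 such that nz(M_{:,n}) ⊆ {K(i,j,k,t) : 1 ≤ i ≤ d_out, (k,t) ∈ 𝒜}, where nz(M_{:,n}) denotes the set of nonzero real values appearing as entries of the n-th column of M. -/
import Mathlib


/-!
2D multi-channel convolutional layer, 0-based reindexing of the 1-based
description in the paper.  The input is `X : Fin d_in × Fin h_in × Fin w_in → ℝ`
(a 3D tensor), the kernel is `K : Fin d_out → Fin d_in → Fin k1 → Fin k2 → ℝ`,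
strides `s1 s2`, paddings `p1 p2`,
`h_out = (h_in + 2*p1 - k1)/s1 + 1`, `w_out = (w_in + 2*p2 - k2)/s2 + 1`.
-/

noncomputable section

/-- Zero-padded input, accessed with 0-based padded coordinates `a b`
(so `a` ranges over `0, …, h_in + 2*p1 - 1`):
`padX X j a b = X (j, a - p1, b - p2)` when `p1 ≤ a < h_in + p1` and
`p2 ≤ b < w_in + p2`, and `0` otherwise. -/
def padX (d_in h_in w_in p1 p2 : ℕ)
    (X : Fin d_in × Fin h_in × Fin w_in → ℝ) (j : Fin d_in) (a b : ℕ) : ℝ :=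
  if h : p1 ≤ a ∧ a < h_in + p1 ∧ p2 ≤ b ∧ b < w_in + p2 then
    X (j, ⟨a - p1, by omega⟩, ⟨b - p2, by omega⟩)
  else 0

/-- The 2D multi-channel convolution:
`conv(X)(i,r,c) = ∑ j ∑ k ∑ t, K i j k t * X̃(j, r*s1 + k, c*s2 + t)`
(all indices 0-based). -/
def convMap (d_in d_out h_in w_in k1 k2 s1 s2 p1 p2 : ℕ)
    (K : Fin d_out → Fin d_in → Fin k1 → Fin k2 → ℝ)
    (X : Fin d_in × Fin h_in × Fin w_in → ℝ) :
    Fin d_out × Fin ((h_in + 2*p1 - k1)/s1 + 1) × Fin ((w_in + 2*p2 - k2)/s2 + 1) → ℝ :=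
  fun irc => ∑ j : Fin d_in, ∑ k : Fin k1, ∑ t : Fin k2,
    K irc.1 j k t *
      padX d_in h_in w_in p1 p2 X j (irc.2.1.val * s1 + k.val) (irc.2.2.val * s2 + t.val)

lemma padX_add (d_in h_in w_in p1 p2 : ℕ)
    (X Y : Fin d_in × Fin h_in × Fin w_in → ℝ) (j : Fin d_in) (a b : ℕ) :
    padX d_in h_in w_in p1 p2 (X + Y) j a b =
      padX d_in h_in w_in p1 p2 X j a b + padX d_in h_in w_in p1 p2 Y j a b := by
  unfold padX; split <;> simp

lemma padX_smul (d_in h_in w_in p1 p2 : ℕ) (c : ℝ)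
    (X : Fin d_in × Fin h_in × Fin w_in → ℝ) (j : Fin d_in) (a b : ℕ) :
    padX d_in h_in w_in p1 p2 (c • X) j a b = c * padX d_in h_in w_in p1 p2 X j a b := by
  unfold padX; split <;> simp

/-- `conv` as a linear map between the spaces of 3D tensors. -/
def convLinMap (d_in d_out h_in w_in k1 k2 s1 s2 p1 p2 : ℕ)
    (K : Fin d_out → Fin d_in → Fin k1 → Fin k2 → ℝ) :
    ((Fin d_in × Fin h_in × Fin w_in) → ℝ) →ₗ[ℝ]
      ((Fin d_out × Fin ((h_in + 2*p1 - k1)/s1 + 1) × Fin ((w_in + 2*p2 - k2)/s2 + 1)) → ℝ) where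
  toFun := convMap d_in d_out h_in w_in k1 k2 s1 s2 p1 p2 K
  map_add' X Y := by
    funext irc
    simp only [convMap, padX_add, mul_add, Finset.sum_add_distrib, Pi.add_apply]
  map_smul' c X := by
    funext irc
    simp only [convMap, padX_smul, RingHom.id_apply, Pi.smul_apply, smul_eq_mul,
      Finset.mul_sum]
    congr 1; funext j; congr 1; funext k; congr 1; funext t; ring

/-- The index set `𝒜_(a,b)` of Lemma 1 (0-based):
`{(c,d) : s1 ∣ c - a, s2 ∣ d - b, 0 ≤ c - a ≤ h_in + 2p1 - k1, 0 ≤ d - b ≤ w_in + 2p2 - k2}`. -/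
def AFin (h_in w_in k1 k2 s1 s2 p1 p2 : ℕ) (a : Fin k1) (b : Fin k2) :
    Finset (Fin k1 × Fin k2) :=
  Finset.univ.filter fun cd =>
    a.val ≤ cd.1.val ∧ s1 ∣ (cd.1.val - a.val) ∧ cd.1.val - a.val ≤ h_in + 2*p1 - k1 ∧
    b.val ≤ cd.2.val ∧ s2 ∣ (cd.2.val - b.val) ∧ cd.2.val - b.val ≤ w_in + 2*p2 - k2

/-- The collection `𝒮 = {𝒜_(a,b) : (a,b) ∈ {1,…,k1} × {1,…,k2}}`. -/
def Ssets (h_in w_in k1 k2 s1 s2 p1 p2 : ℕ) : Finset (Finset (Fin k1 × Fin k2)) :=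
  Finset.univ.image fun ab : Fin k1 × Fin k2 => AFin h_in w_in k1 k2 s1 s2 p1 p2 ab.1 ab.2

/-- The matrix `M` of `conv` in the standard bases: the entry at row `(i,r,c)`
and column `(j,y,x)` is the coefficient of the input entry `(j,y,x)` in the
output entry `(i,r,c)`, i.e. `conv` applied to the standard basis vector of the
column index, evaluated at the row index.  (Rows and columns are indexed by the
output and input coordinate triples, which correspond to the 1-based linear
indices `(i−1)·h_out·w_out + (r−1)·w_out + c` and
`(j−1)·h_in·w_in + (y−1)·w_in + x` of the paper.) -/
def convMatrix (d_in d_out h_in w_in k1 k2 s1 s2 p1 p2 : ℕ)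
    (K : Fin d_out → Fin d_in → Fin k1 → Fin k2 → ℝ) :
    Matrix (Fin d_out × Fin ((h_in + 2*p1 - k1)/s1 + 1) × Fin ((w_in + 2*p2 - k2)/s2 + 1))
      (Fin d_in × Fin h_in × Fin w_in) ℝ :=
  fun out inp =>
    convMap d_in d_out h_in w_in k1 k2 s1 s2 p1 p2 K (fun q => if q = inp then 1 else 0) out


lemma padX_single (d_in h_in w_in p1 p2 : ℕ) (j j' : Fin d_in) (y : Fin h_in) (x : Fin w_in)
    (a b : ℕ) :
    padX d_in h_in w_in p1 p2 (fun q => if q = (j, y, x) then (1:ℝ) else 0) j' a b =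
      if j' = j ∧ a = y.val + p1 ∧ b = x.val + p2 then 1 else 0 := by
  unfold padX
  by_cases hc : j' = j ∧ a = y.val + p1 ∧ b = x.val + p2
  · obtain ⟨hj, ha, hb⟩ := hc
    subst hj; subst ha; subst hb
    rw [dif_pos (by omega)]
    simp [Prod.ext_iff, Fin.ext_iff]
  · rw [if_neg hc]
    split
    · rename_i h
      have hne : ((j', (⟨a - p1, by omega⟩ : Fin h_in), (⟨b - p2, by omega⟩ : Fin w_in)) :
          Fin d_in × Fin h_in × Fin w_in) ≠ (j, y, x) := by
        intro hq
        apply hc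
        have h1 := congrArg Prod.fst hq
        have h2 := congrArg (fun q : Fin d_in × Fin h_in × Fin w_in => q.2.1.val) hq
        have h3 := congrArg (fun q : Fin d_in × Fin h_in × Fin w_in => q.2.2.val) hq
        simp only at h1 h2 h3
        exact ⟨h1, by omega, by omega⟩
      simp only [hne, if_false]
    · rfl

lemma convMatrix_entry_cases (d_in d_out h_in w_in k1 k2 s1 s2 p1 p2 : ℕ)
    (K : Fin d_out → Fin d_in → Fin k1 → Fin k2 → ℝ)
    (i : Fin d_out) (r : Fin ((h_in + 2*p1 - k1)/s1 + 1)) (c : Fin ((w_in + 2*p2 - k2)/s2 + 1))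
    (j : Fin d_in) (y : Fin h_in) (x : Fin w_in)
    (h : convMatrix d_in d_out h_in w_in k1 k2 s1 s2 p1 p2 K (i, r, c) (j, y, x) ≠ 0) :
    ∃ (k : Fin k1) (t : Fin k2), r.val * s1 + k.val = y.val + p1 ∧
      c.val * s2 + t.val = x.val + p2 ∧
      convMatrix d_in d_out h_in w_in k1 k2 s1 s2 p1 p2 K (i, r, c) (j, y, x) = K i j k t := by
  unfold convMatrix convMap at h ⊢
  simp only [padX_single] at h ⊢
  obtain ⟨j', -, hj'⟩ := Finset.exists_ne_zero_of_sum_ne_zero h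
  obtain ⟨k, -, hk⟩ := Finset.exists_ne_zero_of_sum_ne_zero hj'
  obtain ⟨t, -, ht⟩ := Finset.exists_ne_zero_of_sum_ne_zero hk
  have hcond : j' = j ∧ r.val * s1 + k.val = y.val + p1 ∧ c.val * s2 + t.val = x.val + p2 := by
    by_contra hcc
    rw [if_neg hcc, mul_zero] at ht
    exact ht rfl
  obtain ⟨rfl, h1, h2⟩ := hcond
  refine ⟨k, t, h1, h2, ?_⟩
  refine (Fintype.sum_eq_single j' ?_).trans ?_
  · intro j'' hj''
    apply Finset.sum_eq_zero; intro k' _; apply Finset.sum_eq_zero; intro t' _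
    rw [if_neg, mul_zero]
    rintro ⟨rfl, -, -⟩
    exact hj'' rfl
  refine (Fintype.sum_eq_single k ?_).trans ?_
  · intro k' hk'
    apply Finset.sum_eq_zero; intro t' _
    rw [if_neg, mul_zero]
    rintro ⟨-, h1', -⟩
    exact hk' (Fin.ext (by omega))
  refine (Fintype.sum_eq_single t ?_).trans ?_
  · intro t' ht'
    rw [if_neg, mul_zero]
    rintro ⟨-, -, h2'⟩
    exact ht' (Fin.ext (by omega))
  rw [if_pos ⟨rfl, h1, h2⟩, mul_one]

/-- first part of Lemma 1.  Under Assumption 1, for every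
column `n = (j, y, x)` of `M` there exists `𝒜 ∈ 𝒮` such that every nonzero
value appearing in that column is one of the kernel values
`K i j k t` with `1 ≤ i ≤ d_out` and `(k,t) ∈ 𝒜`. -/
theorem conv_matrix_column_nonzero_subset (d_in d_out h_in w_in k1 k2 s1 s2 p1 p2 : ℕ)
    (hdin : 0 < d_in) (hdout : 0 < d_out) (hhin : 0 < h_in) (hwin : 0 < w_in)
    (hk1pos : 0 < k1) (hk2pos : 0 < k2) (hs1 : 0 < s1) (hs2 : 0 < s2)
    (hk1 : k1 ≤ h_in + 2*p1) (hk2 : k2 ≤ w_in + 2*p2)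
    (K : Fin d_out → Fin d_in → Fin k1 → Fin k2 → ℝ)
    -- Assumption 1
    (c1 c2 : ℕ) (hc1pos : 0 < c1) (hc2pos : 0 < c2)
    (hc1 : p1 ≤ c1 * s1) (hc2 : p2 ≤ c2 * s2)
    (hc1min : ∀ m : ℕ, 0 < m → p1 ≤ m * s1 → c1 ≤ m)
    (hc2min : ∀ m : ℕ, 0 < m → p2 ≤ m * s2 → c2 ≤ m)
    (ha1 : k1 + c1 * s1 ≤ h_in + p1) (ha2 : k2 + c2 * s2 ≤ w_in + p2) :
    ∀ n : Fin d_in × Fin h_in × Fin w_in,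
      ∃ A ∈ Ssets h_in w_in k1 k2 s1 s2 p1 p2,
        {v : ℝ | v ≠ 0 ∧ ∃ m, convMatrix d_in d_out h_in w_in k1 k2 s1 s2 p1 p2 K m n = v} ⊆
          {v : ℝ | ∃ i : Fin d_out, ∃ kt ∈ A, K i n.1 kt.1 kt.2 = v} := by
  classical
  rintro ⟨j, y, x⟩
  by_cases hA : (∃ k : Fin k1, ∃ r : Fin ((h_in + 2*p1 - k1)/s1 + 1),
        r.val * s1 + k.val = y.val + p1) ∧
      (∃ t : Fin k2, ∃ c : Fin ((w_in + 2*p2 - k2)/s2 + 1), c.val * s2 + t.val = x.val + p2)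
  · obtain ⟨hA1, hA2⟩ := hA
    set S1 : Finset (Fin k1) := Finset.univ.filter
      (fun k => ∃ r : Fin ((h_in + 2*p1 - k1)/s1 + 1), r.val * s1 + k.val = y.val + p1) with hS1
    set S2 : Finset (Fin k2) := Finset.univ.filter
      (fun t => ∃ c : Fin ((w_in + 2*p2 - k2)/s2 + 1), c.val * s2 + t.val = x.val + p2) with hS2
    have hS1ne : S1.Nonempty := by
      obtain ⟨k, r, hkr⟩ := hA1
      exact ⟨k, by simp [hS1]; exact ⟨r, hkr⟩⟩
    have hS2ne : S2.Nonempty := by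
      obtain ⟨t, c, htc⟩ := hA2
      exact ⟨t, by simp [hS2]; exact ⟨c, htc⟩⟩
    set a := S1.min' hS1ne with haa
    set b := S2.min' hS2ne with hbb
    obtain ⟨ra, hra⟩ : ∃ r : Fin ((h_in + 2*p1 - k1)/s1 + 1),
        r.val * s1 + a.val = y.val + p1 :=
      (Finset.mem_filter.mp (S1.min'_mem hS1ne)).2
    obtain ⟨cb, hcb⟩ : ∃ c : Fin ((w_in + 2*p2 - k2)/s2 + 1),
        c.val * s2 + b.val = x.val + p2 :=
      (Finset.mem_filter.mp (S2.min'_mem hS2ne)).2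
    refine ⟨AFin h_in w_in k1 k2 s1 s2 p1 p2 a b, ?_, ?_⟩
    · exact Finset.mem_image.mpr ⟨(a, b), Finset.mem_univ _, rfl⟩
    rintro v ⟨hv, ⟨i, r, c⟩, hm⟩
    obtain ⟨k, t, h1, h2, hval⟩ := convMatrix_entry_cases d_in d_out h_in w_in k1 k2 s1 s2 p1 p2
      K i r c j y x (hm ▸ hv)
    have hak : a.val ≤ k.val := by
      have hkS : k ∈ S1 := by simp [hS1]; exact ⟨r, h1⟩
      exact S1.min'_le k hkS
    have hbt : b.val ≤ t.val := by
      have htS : t ∈ S2 := by simp [hS2]; exact ⟨c, h2⟩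
      exact S2.min'_le t htS
    have hrra : r.val ≤ ra.val :=
      Nat.le_of_mul_le_mul_right (by omega) hs1
    have hccb : c.val ≤ cb.val :=
      Nat.le_of_mul_le_mul_right (by omega) hs2
    obtain ⟨d1, hd1⟩ := Nat.le.dest hrra
    obtain ⟨d2, hd2⟩ := Nat.le.dest hccb
    have he1 : ra.val * s1 = r.val * s1 + d1 * s1 := by rw [← hd1, add_mul]
    have he2 : cb.val * s2 = c.val * s2 + d2 * s2 := by rw [← hd2, add_mul]
    have hb1 : ra.val * s1 ≤ h_in + 2*p1 - k1 := by
      calc ra.val * s1 ≤ ((h_in + 2*p1 - k1)/s1) * s1 :=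
            Nat.mul_le_mul_right s1 (by omega)
        _ ≤ h_in + 2*p1 - k1 := Nat.div_mul_le_self _ _
    have hb2 : cb.val * s2 ≤ w_in + 2*p2 - k2 := by
      calc cb.val * s2 ≤ ((w_in + 2*p2 - k2)/s2) * s2 :=
            Nat.mul_le_mul_right s2 (by omega)
        _ ≤ w_in + 2*p2 - k2 := Nat.div_mul_le_self _ _
    refine ⟨i, (k, t), ?_, by rw [← hval, hm]⟩
    unfold AFin
    rw [Finset.mem_filter]
    dsimp only
    refine ⟨Finset.mem_univ _, hak, ⟨d1, by rw [Nat.mul_comm]; omega⟩, by omega,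
      hbt, ⟨d2, by rw [Nat.mul_comm]; omega⟩, by omega⟩
  · refine ⟨AFin h_in w_in k1 k2 s1 s2 p1 p2 ⟨0, hk1pos⟩ ⟨0, hk2pos⟩,
      Finset.mem_image.mpr ⟨(⟨0, hk1pos⟩, ⟨0, hk2pos⟩), Finset.mem_univ _, rfl⟩, ?_⟩
    rintro v ⟨hv, ⟨i, r, c⟩, hm⟩
    obtain ⟨k, t, h1, h2, -⟩ := convMatrix_entry_cases d_in d_out h_in w_in k1 k2 s1 s2 p1 p2
      K i r c j y x (hm ▸ hv)
    exact absurd ⟨⟨k, r, h1⟩, ⟨t, c, h2⟩⟩ hA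

end
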